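/- Let n ≥ 2, X = [0,1]^n ∪ [-1,0]^n with Euclidean metric and Lebesgue measure ℒ^n, E = [0,1]^n, o the origin. Then for 1 < p < ∞ and θ > 0, there exist constants c, C > 0 such that for all sufficiently small r > 0: c r^{n-pθ} ≤ ∫_X ⨍_{B(x,r)} |χ_E(x)-χ_E(y)|^p / r^{pθ} dℒ^n(y) dℒ^n(x) ≤ C r^{n-pθ}. Consequently χ_E ∈ KS^θ_p(X) with ‖χ_E‖_{KS^θ_p(X)} = 0 if pθ < n, ‖χ_E‖_{KS^θ_p(X)} ∈ (0,∞) if pθ = n, and χ_E ∉ KS^θ_p(X) if pθ > n. -/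

import Mathlib

/-!
`χ_E` only jumps across the origin `o`: if `x ∈ X` and `B(x,r)` meets the other cube at `y`, then
`‖x‖ ≤ dist x y < r`. Hence the ball energy at scale `r` is at most `|B(o,r)| / r^{pθ} ≲ r^{n-pθ}`.
Conversely, a cube `Q ⊆ [-1,0]^n` of side `≈ r` next to `o` has, for every `x ∈ Q`, a cube
`T ⊆ [0,1]^n ∩ B(x,r)` of side `≈ r`, so the energy is at least `|Q| |T| / (|B(x,r)| r^{pθ}) ≈ r^{n-pθ}`.
The behaviour of the Korevaar–Schoen energy follows by letting `r → 0`.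
-/

open MeasureTheory Metric Filter ENNReal Topology

noncomputable def besovEnergy {X : Type*} [MetricSpace X] [MeasurableSpace X]
    (μ : Measure X) (p θ : ℝ) (u : X → ℝ) : ℝ≥0∞ :=
  ∫⁻ x, ∫⁻ y, ENNReal.ofReal (|u x - u y| ^ p) /
    (ENNReal.ofReal (dist x y ^ (θ * p)) * μ (ball x (dist x y))) ∂μ ∂μ

noncomputable def ballEnergy {X : Type*} [MetricSpace X] [MeasurableSpace X]
    (μ : Measure X) (p θ : ℝ) (u : X → ℝ) (t : ℝ) : ℝ≥0∞ :=
  ∫⁻ x, (∫⁻ y in ball x t, ENNReal.ofReal (|u x - u y| ^ p) ∂μ) /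
    (μ (ball x t) * ENNReal.ofReal (t ^ (θ * p))) ∂μ

noncomputable def ksEnergy {X : Type*} [MetricSpace X] [MeasurableSpace X]
    (μ : Measure X) (p θ : ℝ) (u : X → ℝ) : ℝ≥0∞ :=
  Filter.limsup (ballEnergy μ p θ u) (𝓝[>] (0:ℝ))

noncomputable def binfEnergy {X : Type*} [MetricSpace X] [MeasurableSpace X]
    (μ : Measure X) (p θ : ℝ) (u : X → ℝ) : ℝ≥0∞ :=
  ⨆ t : Set.Ioi (0:ℝ), ballEnergy μ p θ u t

/-- The doubling property together with positivity and finiteness of the measure of balls. -/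
def IsDoublingMeas {X : Type*} [MetricSpace X] [MeasurableSpace X] (μ : Measure X) : Prop :=
  ∃ C : ℝ≥0∞, C < ⊤ ∧ ∀ x : X, ∀ r : ℝ, 0 < r →
    μ (ball x (2 * r)) ≤ C * μ (ball x r) ∧ 0 < μ (ball x r) ∧ μ (ball x r) < ⊤

/-- Membership in the Besov space `B^θ_{p,p}(X)`. -/
def MemBesov {X : Type*} [MetricSpace X] [MeasurableSpace X]
    (μ : Measure X) (p θ : ℝ) (u : X → ℝ) : Prop :=
  MemLp u (ENNReal.ofReal p) μ ∧ besovEnergy μ p θ u < ⊤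

/-- The positive unit cube `[0,1]^n`. -/
def cubeP (n : ℕ) : Set (EuclideanSpace ℝ (Fin n)) := {x | ∀ i, x i ∈ Set.Icc (0:ℝ) 1}

/-- The negative unit cube `[-1,0]^n`. -/
def cubeN (n : ℕ) : Set (EuclideanSpace ℝ (Fin n)) := {x | ∀ i, x i ∈ Set.Icc (-1:ℝ) 0}

open scoped Classical in
lemma ofReal_abs_indicator_sub_rpow {X : Type*} {E : Set X} {p : ℝ} (hp : p ≠ 0) (x y : X) :
    ENNReal.ofReal (|E.indicator (fun _ => (1:ℝ)) x - E.indicator (fun _ => (1:ℝ)) y| ^ p) =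
      if (x ∈ E ↔ y ∈ E) then 0 else 1 := by
  by_cases hx : x ∈ E <;> by_cases hy : y ∈ E <;> simp [hx, hy, hp]

lemma ofReal_rpow_natCast_sub {t : ℝ} (ht : 0 < t) (n : ℕ) (s : ℝ) :
    ENNReal.ofReal (t ^ ((n:ℝ) - s)) = ENNReal.ofReal t ^ n / ENNReal.ofReal (t ^ s) := by
  rw [Real.rpow_sub ht, Real.rpow_natCast, ENNReal.ofReal_div_of_pos (Real.rpow_pos_of_pos ht s),
    ENNReal.ofReal_pow ht.le]

lemma inv_mul_rpow_natCast_sub_eq {K t : ℝ} (hK : K ≠ 0) (ht : 0 < t) (n : ℕ) (s : ℝ) :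
    (2 ^ n * K ^ (2 * n))⁻¹ * t ^ ((n:ℝ) - s) =
      (t / K) ^ n / ((2 * t) ^ n * t ^ s) * (t / K) ^ n := by
  have : t ^ n ≠ 0 := by positivity
  rw [Real.rpow_sub ht, Real.rpow_natCast, pow_mul', div_pow]
  field_simp
  ring

section IndicatorEnergy

variable {X : Type*} [MetricSpace X] [MeasurableSpace X]
  {μ : Measure X} {E : Set X} {p θ t : ℝ}

lemma ballEnergy_indicator_le [OpensMeasurableSpace X] (hp : 0 < p) (ht : 0 < t) (o : X)
    (hsep : ∀ᵐ x ∂μ, ∀ᵐ y ∂μ, ¬(x ∈ E ↔ y ∈ E) → dist x o ≤ dist x y) :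
    ballEnergy μ p θ (E.indicator fun _ => (1:ℝ)) t ≤
      μ (ball o t) / ENNReal.ofReal (t ^ (θ * p)) := by
  set c := ENNReal.ofReal (t ^ (θ * p))
  have hc : c ≠ 0 := (ENNReal.ofReal_pos.2 (Real.rpow_pos_of_pos ht _)).ne'
  have hint : ∀ x y, ENNReal.ofReal (|E.indicator (fun _ => (1:ℝ)) x -
      E.indicator (fun _ => (1:ℝ)) y| ^ p) ≤ 1 := fun x y => by
    rw [ofReal_abs_indicator_sub_rpow hp.ne']; split_ifs <;> simp
  have hpointwise : ∀ᵐ x ∂μ, (∫⁻ y in ball x t, ENNReal.ofReal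
      (|E.indicator (fun _ => (1:ℝ)) x - E.indicator (fun _ => (1:ℝ)) y| ^ p) ∂μ) /
        (μ (ball x t) * c) ≤ (ball o t).indicator (fun _ => c⁻¹) x := by
    filter_upwards [hsep] with x hx
    by_cases hxo : x ∈ ball o t
    · rw [Set.indicator_of_mem hxo]
      refine ENNReal.div_le_of_le_mul ?_
      rw [mul_comm, ENNReal.mul_inv_cancel_right hc ENNReal.ofReal_ne_top, ← setLIntegral_one]
      exact lintegral_mono (hint x)
    · rw [Set.indicator_of_notMem hxo]
      refine le_of_eq (ENNReal.div_eq_zero_iff.2 (Or.inl ?_))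
      refine (lintegral_congr_ae ?_).trans lintegral_zero
      filter_upwards [ae_restrict_mem measurableSet_ball, ae_restrict_of_ae hx] with y hyx hxy
      rw [ofReal_abs_indicator_sub_rpow hp.ne', if_pos]
      by_contra hE
      exact hxo (mem_ball.2 ((hxy hE).trans_lt (mem_ball'.1 hyx)))
  calc ballEnergy μ p θ (E.indicator fun _ => (1:ℝ)) t
      ≤ ∫⁻ x, (ball o t).indicator (fun _ => c⁻¹) x ∂μ := lintegral_mono_ae hpointwise
    _ = μ (ball o t) / c := by
      rw [lintegral_indicator_const measurableSet_ball, ENNReal.div_eq_inv_mul]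

lemma le_ballEnergy_indicator {Q T : Set X} {M : ℝ≥0∞} (hQ : MeasurableSet Q) (hT : MeasurableSet T)
    (hQE : Q ⊆ Eᶜ) (hTE : T ⊆ E) (hTball : ∀ x ∈ Q, T ⊆ ball x t)
    (hM : ∀ x ∈ Q, μ (ball x t) ≤ M) :
    μ T / (M * ENNReal.ofReal (t ^ (θ * p))) * μ Q ≤
      ballEnergy μ p θ (E.indicator fun _ => (1:ℝ)) t := by
  have hinner : ∀ x ∈ Q, μ T ≤ ∫⁻ y in ball x t, ENNReal.ofReal
      (|E.indicator (fun _ => (1:ℝ)) x - E.indicator (fun _ => (1:ℝ)) y| ^ p) ∂μ := by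
    intro x hx
    calc μ T = ∫⁻ y in T, ENNReal.ofReal
          (|E.indicator (fun _ => (1:ℝ)) x - E.indicator (fun _ => (1:ℝ)) y| ^ p) ∂μ := by
          rw [← setLIntegral_one]
          refine setLIntegral_congr_fun hT fun y hy => ?_
          simp [Set.indicator_of_notMem (hQE hx), Set.indicator_of_mem (hTE hy)]
      _ ≤ _ := lintegral_mono_set (hTball x hx)
  calc μ T / (M * ENNReal.ofReal (t ^ (θ * p))) * μ Q
      = ∫⁻ _ in Q, μ T / (M * ENNReal.ofReal (t ^ (θ * p))) ∂μ := (setLIntegral_const _ _).symm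
    _ ≤ ∫⁻ x in Q, (∫⁻ y in ball x t, ENNReal.ofReal
          (|E.indicator (fun _ => (1:ℝ)) x - E.indicator (fun _ => (1:ℝ)) y| ^ p) ∂μ) /
            (μ (ball x t) * ENNReal.ofReal (t ^ (θ * p))) ∂μ :=
      setLIntegral_mono' hQ fun x hx => ENNReal.div_le_div (hinner x hx) (by gcongr; exact hM x hx)
    _ ≤ ballEnergy μ p θ (E.indicator fun _ => (1:ℝ)) t := setLIntegral_le_lintegral _ _

end IndicatorEnergy

def cube (n : ℕ) (a b : ℝ) : Set (EuclideanSpace ℝ (Fin n)) := {x | ∀ i, x i ∈ Set.Icc a b}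

section Cube

variable {n : ℕ}

lemma isClosed_cube (a b : ℝ) : IsClosed (cube n a b) := by
  simp only [cube, Set.ofPred_forall]
  exact isClosed_iInter fun i => isClosed_Icc.preimage (by fun_prop)

lemma volume_cube (a b : ℝ) : volume (cube n a b) = ENNReal.ofReal (b - a) ^ n := by
  have h : cube n a b = (MeasurableEquiv.toLp 2 (Fin n → ℝ)).symm ⁻¹'
      Set.univ.pi fun _ => Set.Icc a b := by
    ext x
    simp only [cube, Set.mem_ofPred_eq, Set.mem_preimage, Set.mem_univ_pi]
    rfl
  rw [h, (EuclideanSpace.volume_preserving_symm_measurableEquiv_toLp (Fin n)).measure_preimage_equiv,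
    volume_pi_pi]
  simp [Real.volume_Icc]

lemma ball_zero_subset_cube (t : ℝ) : ball (0 : EuclideanSpace ℝ (Fin n)) t ⊆ cube n (-t) t :=
  fun x hx i => abs_le.1 <| ((PiLp.norm_apply_le x i).trans (mem_ball_zero_iff.1 hx).le)

lemma volume_ball_le_ofReal_two_mul_pow (x : EuclideanSpace ℝ (Fin n)) (t : ℝ) :
    volume (ball x t) ≤ ENNReal.ofReal (2 * t) ^ n := by
  rw [Measure.addHaar_ball_center, two_mul, ← sub_neg_eq_add, ← volume_cube]
  exact measure_mono (ball_zero_subset_cube t)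

lemma norm_le_sqrt_mul_of_forall_abs_le {x : EuclideanSpace ℝ (Fin n)} {a : ℝ} (ha : 0 ≤ a)
    (h : ∀ i, |x i| ≤ a) : ‖x‖ ≤ √n * a := by
  rw [EuclideanSpace.norm_eq, ← Real.sqrt_sq ha, ← Real.sqrt_mul n.cast_nonneg]
  gcongr
  calc ∑ i, ‖x i‖ ^ 2 ≤ ∑ _i : Fin n, a ^ 2 :=
        Finset.sum_le_sum fun i _ => by rw [Real.norm_eq_abs]; gcongr; exact h i
    _ = n * a ^ 2 := by simp

lemma norm_le_dist_of_forall_mul_nonpos {x y : EuclideanSpace ℝ (Fin n)}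
    (h : ∀ i, x i * y i ≤ 0) : ‖x‖ ≤ dist x y := by
  rw [EuclideanSpace.norm_eq, EuclideanSpace.dist_eq]
  gcongr with i
  rw [Real.norm_eq_abs, Real.dist_eq, ← sq_le_sq]
  nlinarith [h i]

end Cube

section GluedCubes

variable {n : ℕ} {p θ t : ℝ}

lemma norm_le_dist_of_mem_cubeP_union_cubeN {x y : EuclideanSpace ℝ (Fin n)}
    (hx : x ∈ cubeP n ∪ cubeN n) (hy : y ∈ cubeP n ∪ cubeN n)
    (hxy : ¬(x ∈ cubeP n ↔ y ∈ cubeP n)) : ‖x‖ ≤ dist x y := by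
  by_cases hxP : x ∈ cubeP n
  · have hyN : y ∈ cubeN n := hy.resolve_left (by tauto)
    exact norm_le_dist_of_forall_mul_nonpos fun i =>
      mul_nonpos_of_nonneg_of_nonpos (hxP i).1 (hyN i).2
  · have hxN : x ∈ cubeN n := hx.resolve_left hxP
    have hyP : y ∈ cubeP n := by tauto
    exact norm_le_dist_of_forall_mul_nonpos fun i =>
      mul_nonpos_of_nonpos_of_nonneg (hxN i).2 (hyP i).1

lemma measurableSet_cubeP_union_cubeN : MeasurableSet (cubeP n ∪ cubeN n) :=
  ((isClosed_cube 0 1).union (isClosed_cube (-1) 0)).measurableSet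

lemma ballEnergy_cubes_le (hp : 0 < p) (ht : 0 < t) :
    ballEnergy (volume.restrict (cubeP n ∪ cubeN n)) p θ ((cubeP n).indicator fun _ => (1:ℝ)) t ≤
      2 ^ n * ENNReal.ofReal (t ^ ((n:ℝ) - p * θ)) := by
  have hS := measurableSet_cubeP_union_cubeN (n := n)
  calc _ ≤ volume.restrict (cubeP n ∪ cubeN n) (ball 0 t) / ENNReal.ofReal (t ^ (θ * p)) :=
        ballEnergy_indicator_le hp ht 0 <| ae_restrict_of_forall_mem hS fun x hx =>
          ae_restrict_of_forall_mem hS fun y hy hxy =>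
            (dist_zero_right x).trans_le (norm_le_dist_of_mem_cubeP_union_cubeN hx hy hxy)
    _ ≤ ENNReal.ofReal (2 * t) ^ n / ENNReal.ofReal (t ^ (θ * p)) := by
        gcongr
        exact Measure.restrict_apply_le _ _ |>.trans (volume_ball_le_ofReal_two_mul_pow 0 t)
    _ = 2 ^ n * ENNReal.ofReal (t ^ ((n:ℝ) - p * θ)) := by
        rw [ofReal_rpow_natCast_sub ht n, mul_comm p θ, ENNReal.ofReal_mul zero_le_two, mul_pow,
          ENNReal.ofReal_ofNat, mul_div_assoc]

lemma ofReal_inv_mul_rpow_le_ballEnergy_cubes (hn : 0 < n) (ht : 0 < t) (ht1 : t < 1) :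
    ENNReal.ofReal ((2 ^ n * (4 * √n) ^ (2 * n))⁻¹) * ENNReal.ofReal (t ^ ((n:ℝ) - p * θ)) ≤
      ballEnergy (volume.restrict (cubeP n ∪ cubeN n)) p θ
        ((cubeP n).indicator fun _ => (1:ℝ)) t := by
  have hsqrt : 1 ≤ √(n:ℝ) := Real.one_le_sqrt.2 (by exact_mod_cast hn)
  -- `Q ⊆ [-1,0]^n` and `T ⊆ [0,1]^n` have side `a`, and `Q - T ⊆ [-3a,3a]^n ⊆ ball 0 t`.
  set K := 4 * √(n:ℝ) with hK
  set a := t / K with ha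
  have ha0 : 0 < a := by positivity
  have hat : √n * a = t / 4 := by rw [ha, hK]; field_simp
  have ha1 : 2 * a ≤ 1 := by nlinarith
  set Q := cube n (-(2 * a)) (-a)
  set T := cube n 0 a
  have hQE : Q ⊆ (cubeP n)ᶜ := fun x hx hxP => by
    linarith [(hx ⟨0, hn⟩).2, (hxP ⟨0, hn⟩).1]
  have hTE : T ⊆ cubeP n := fun y hy i => ⟨(hy i).1, by linarith [(hy i).2]⟩
  have hQS : Q ⊆ cubeP n ∪ cubeN n := fun x hx =>
    Or.inr fun i => ⟨by linarith [(hx i).1], by linarith [(hx i).2]⟩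
  have hTball : ∀ x ∈ Q, T ⊆ ball x t := fun x hx y hy => by
    rw [mem_ball, dist_comm, dist_eq_norm]
    calc ‖x - y‖ ≤ √n * (3 * a) :=
          norm_le_sqrt_mul_of_forall_abs_le (by positivity) fun i => by
            simp only [PiLp.sub_apply]
            exact abs_le.2 ⟨by linarith [(hx i).1, (hy i).2], by linarith [(hx i).2, (hy i).1]⟩
      _ < t := by linarith
  have hμT : volume.restrict (cubeP n ∪ cubeN n) T = ENNReal.ofReal a ^ n := by
    rw [Measure.restrict_eq_self _ (hTE.trans Set.subset_union_left), volume_cube, sub_zero]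
  have hμQ : volume.restrict (cubeP n ∪ cubeN n) Q = ENNReal.ofReal a ^ n := by
    rw [Measure.restrict_eq_self _ hQS, volume_cube, neg_sub_neg, two_mul, add_sub_cancel_right]
  have hbound := le_ballEnergy_indicator (μ := volume.restrict (cubeP n ∪ cubeN n)) (p := p)
    (θ := θ) (M := ENNReal.ofReal (2 * t) ^ n) (isClosed_cube _ _).measurableSet
    (isClosed_cube _ _).measurableSet hQE hTE hTball fun x _ =>
      (Measure.restrict_apply_le _ _).trans (volume_ball_le_ofReal_two_mul_pow x t)
  rw [hμT, hμQ] at hbound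
  rwa [← ENNReal.ofReal_mul (by positivity), mul_comm p θ,
    inv_mul_rpow_natCast_sub_eq (by positivity : K ≠ 0) ht, ENNReal.ofReal_mul (by positivity),
    ENNReal.ofReal_div_of_pos (by positivity), ENNReal.ofReal_mul (by positivity),
    ENNReal.ofReal_pow ha0.le, ENNReal.ofReal_pow (by positivity)]

end GluedCubes

section LimsupRpow

variable {f : ℝ → ℝ≥0∞} {s : ℝ}

lemma limsup_nhdsGT_zero_eq_zero_of_le_rpow {C : ℝ≥0∞} (hs : 0 < s) (hC : C ≠ ⊤)
    (h : ∀ᶠ r in 𝓝[>] 0, f r ≤ C * ENNReal.ofReal (r ^ s)) : limsup f (𝓝[>] 0) = 0 := by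
  have hrpow : Tendsto (fun r : ℝ => r ^ s) (𝓝[>] 0) (𝓝 0) := by
    simpa [Real.zero_rpow hs.ne'] using
      (Real.continuousAt_rpow_const 0 s (Or.inr hs.le)).tendsto.mono_left nhdsWithin_le_nhds
  have hbound : Tendsto (fun r : ℝ => C * ENNReal.ofReal (r ^ s)) (𝓝[>] 0) (𝓝 0) := by
    simpa using ENNReal.Tendsto.const_mul (ENNReal.tendsto_ofReal hrpow) (Or.inr hC)
  exact (tendsto_of_tendsto_of_tendsto_of_le_of_le' tendsto_const_nhds hbound
    (Eventually.of_forall fun _ => zero_le) h).limsup_eq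

lemma limsup_nhdsGT_zero_eq_top_of_rpow_le {c : ℝ≥0∞} (hs : s < 0) (hc : c ≠ 0)
    (h : ∀ᶠ r in 𝓝[>] 0, c * ENNReal.ofReal (r ^ s) ≤ f r) : limsup f (𝓝[>] 0) = ⊤ := by
  have hbound : Tendsto (fun r : ℝ => c * ENNReal.ofReal (r ^ s)) (𝓝[>] 0) (𝓝 ⊤) := by
    simpa [ENNReal.mul_top hc] using ENNReal.Tendsto.const_mul (a := c)
      (ENNReal.tendsto_ofReal_atTop.comp (tendsto_rpow_neg_nhdsGT_zero hs)) (Or.inl top_ne_zero)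
  exact (tendsto_nhds_top_mono hbound h).limsup_eq

end LimsupRpow

theorem statement17_general (n : ℕ) (hn : 2 ≤ n) (p θ : ℝ) (hp : 1 < p) :
    (∃ c C : ℝ≥0∞, 0 < c ∧ C < ⊤ ∧ ∃ r₀ : ℝ, 0 < r₀ ∧ ∀ r ∈ Set.Ioo (0:ℝ) r₀,
      c * ENNReal.ofReal (r ^ ((n:ℝ) - p * θ)) ≤
        ballEnergy (volume.restrict (cubeP n ∪ cubeN n)) p θ
          ((cubeP n).indicator fun _ => (1:ℝ)) r ∧
      ballEnergy (volume.restrict (cubeP n ∪ cubeN n)) p θ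
          ((cubeP n).indicator fun _ => (1:ℝ)) r ≤
        C * ENNReal.ofReal (r ^ ((n:ℝ) - p * θ))) ∧
    (p * θ < n → ksEnergy (volume.restrict (cubeP n ∪ cubeN n)) p θ
      ((cubeP n).indicator fun _ => (1:ℝ)) = 0) ∧
    (p * θ = n → 0 < ksEnergy (volume.restrict (cubeP n ∪ cubeN n)) p θ
        ((cubeP n).indicator fun _ => (1:ℝ)) ∧
      ksEnergy (volume.restrict (cubeP n ∪ cubeN n)) p θ
        ((cubeP n).indicator fun _ => (1:ℝ)) < ⊤) ∧
    ((n:ℝ) < p * θ → ksEnergy (volume.restrict (cubeP n ∪ cubeN n)) p θ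
      ((cubeP n).indicator fun _ => (1:ℝ)) = ⊤) := by
  set c := ENNReal.ofReal ((2 ^ n * (4 * √n) ^ (2 * n))⁻¹)
  have hc : c ≠ 0 := (ENNReal.ofReal_pos.2 (by positivity)).ne'
  have hC : (2 : ℝ≥0∞) ^ n ≠ ⊤ := ENNReal.pow_ne_top ENNReal.ofNat_ne_top
  have hbounds : ∀ r ∈ Set.Ioo (0:ℝ) 1,
      c * ENNReal.ofReal (r ^ ((n:ℝ) - p * θ)) ≤
        ballEnergy (volume.restrict (cubeP n ∪ cubeN n)) p θ
          ((cubeP n).indicator fun _ => (1:ℝ)) r ∧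
      ballEnergy (volume.restrict (cubeP n ∪ cubeN n)) p θ
          ((cubeP n).indicator fun _ => (1:ℝ)) r ≤
        2 ^ n * ENNReal.ofReal (r ^ ((n:ℝ) - p * θ)) := fun r hr =>
    ⟨ofReal_inv_mul_rpow_le_ballEnergy_cubes (by omega) hr.1 hr.2,
      ballEnergy_cubes_le (one_pos.trans hp) hr.1⟩
  have hev : ∀ᶠ r in 𝓝[>] (0:ℝ), r ∈ Set.Ioo 0 1 := Ioo_mem_nhdsGT one_pos
  refine ⟨⟨c, 2 ^ n, pos_iff_ne_zero.2 hc, hC.lt_top, 1, one_pos, hbounds⟩,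
    fun h => ?_, fun h => ?_, fun h => ?_⟩
  · exact limsup_nhdsGT_zero_eq_zero_of_le_rpow (sub_pos.2 h) hC
      (hev.mono fun r hr => (hbounds r hr).2)
  · simp only [h, sub_self, Real.rpow_zero, ENNReal.ofReal_one, mul_one] at hbounds
    exact ⟨(pos_iff_ne_zero.2 hc).trans_le
        (le_limsup_of_frequently_le (hev.mono fun r hr => (hbounds r hr).1).frequently),
      (limsup_le_of_le (by isBoundedDefault) (hev.mono fun r hr => (hbounds r hr).2)).trans_lt
        hC.lt_top⟩
  · exact limsup_nhdsGT_zero_eq_top_of_rpow_le (sub_neg.2 h) hc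
      (hev.mono fun r hr => (hbounds r hr).1)

/-- For `X = [0,1]^n ∪ [-1,0]^n` glued at the origin with Lebesgue measure and
`E = [0,1]^n`, the Korevaar–Schoen ball energies of `χ_E` at scale `r` are comparable to
`r^{n-pθ}` for small `r`; consequently `‖χ_E‖_{KS^θ_p(X)} = 0` if `pθ < n`, is positive and
finite if `pθ = n`, and `χ_E ∉ KS^θ_p(X)` if `pθ > n`. -/
theorem statement17 (n : ℕ) (hn : 2 ≤ n) (p θ : ℝ) (hp : 1 < p) (hθ : 0 < θ) :
    (∃ c C : ℝ≥0∞, 0 < c ∧ C < ⊤ ∧ ∃ r₀ : ℝ, 0 < r₀ ∧ ∀ r ∈ Set.Ioo (0:ℝ) r₀,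
      c * ENNReal.ofReal (r ^ ((n:ℝ) - p * θ)) ≤
        ballEnergy (volume.restrict (cubeP n ∪ cubeN n)) p θ
          ((cubeP n).indicator fun _ => (1:ℝ)) r ∧
      ballEnergy (volume.restrict (cubeP n ∪ cubeN n)) p θ
          ((cubeP n).indicator fun _ => (1:ℝ)) r ≤
        C * ENNReal.ofReal (r ^ ((n:ℝ) - p * θ))) ∧
    (p * θ < n → ksEnergy (volume.restrict (cubeP n ∪ cubeN n)) p θ
      ((cubeP n).indicator fun _ => (1:ℝ)) = 0) ∧
    (p * θ = n → 0 < ksEnergy (volume.restrict (cubeP n ∪ cubeN n)) p θ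
        ((cubeP n).indicator fun _ => (1:ℝ)) ∧
      ksEnergy (volume.restrict (cubeP n ∪ cubeN n)) p θ
        ((cubeP n).indicator fun _ => (1:ℝ)) < ⊤) ∧
    ((n:ℝ) < p * θ → ksEnergy (volume.restrict (cubeP n ∪ cubeN n)) p θ
      ((cubeP n).indicator fun _ => (1:ℝ)) = ⊤) :=
  statement17_general n hn p θ hp
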